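/- arXiv:1708.07156 — 3 statements merged into one kernel-verified Lean document; each statement's English description precedes it below -/
import Mathlib

section
/- For all integers m ≥ 1 and k ≥ 0, there exists a unique real polynomial P of degree at most M = m + 2(k+1) satisfying the Dirac-delta kernel conditions of order (m,k): P^{(i)}(1) = P^{(i)}(−1) = 0 for every i = 0, …, k; ∫_{−1}^{1} P(ξ) dξ = 1; and ∫_{−1}^{1} ξ^i P(ξ) dξ = 0 for every i = 1, …, m. -/
open Polynomial intervalIntegral

/-- A real polynomial `P` satisfies the Dirac-delta kernel conditions of order `(m, k)`:
`P⁽ⁱ⁾(±1) = 0` for `i = 0, …, k`, unit mass on `[-1, 1]`, and `m` vanishing moments. -/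
def DiracDeltaKernelCond (m k : ℕ) (P : Polynomial ℝ) : Prop :=
  (∀ i ≤ k, (Polynomial.derivative^[i] P).eval (1 : ℝ) = 0 ∧
            (Polynomial.derivative^[i] P).eval (-1 : ℝ) = 0) ∧
  (∫ ξ in (-1 : ℝ)..1, P.eval ξ) = 1 ∧
  (∀ i, 1 ≤ i → i ≤ m → (∫ ξ in (-1 : ℝ)..1, ξ ^ i * P.eval ξ) = 0)

/-!
The conditions are `2(k+1) + (m+1)` linear conditions on the `(m + 2(k+1) + 1)`-dimensional
space of polynomials of degree `≤ m + 2(k+1)`, so it suffices that the homogeneous system has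
only the trivial solution. Such a `P` has roots of order `k+1` at `±1`, so
`P = (X - 1)^(k+1) (X + 1)^(k+1) Q` with `deg Q ≤ m`. The vanishing moments make `∫ Q P = 0`, but
`(-1)^(k+1) Q P = (1 - x)^(k+1) (1 + x)^(k+1) Q² ≥ 0` on `[-1, 1]`, which forces `Q = 0`.
-/

open MeasureTheory Set

namespace Polynomial

theorem eq_zero_of_ae_eval_eq_zero {μ : Measure ℝ} [NullSingletonClass μ] {s : Set ℝ}
    (hs : μ s ≠ 0) {p : ℝ[X]} (h : ∀ᵐ x ∂μ.restrict s, p.eval x = 0) : p = 0 := by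
  by_contra hp
  have hroots : ∀ᵐ x ∂μ.restrict s, ¬p.IsRoot x :=
    ae_restrict_of_ae
      (measure_eq_zero_iff_ae_notMem.1 ((p.finite_setOfPred_isRoot hp).measure_zero μ))
  have hfalse : ∀ᵐ _ ∂μ.restrict s, False := (h.and hroots).mono fun _ hx => hx.2 hx.1
  exact hs (Measure.restrict_eq_zero.1 (ae_eq_bot.1 (Filter.eventually_false_iff_eq_bot.1 hfalse)))

theorem eq_zero_of_intervalIntegral_eq_zero_of_nonneg {a b : ℝ} (hab : a < b) {p : ℝ[X]}
    (hp : ∀ x ∈ Ioc a b, 0 ≤ p.eval x) (h : ∫ x in a..b, p.eval x = 0) : p = 0 := by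
  rw [integral_eq_zero_iff_of_le_of_nonneg_ae hab.le
    (ae_restrict_of_forall_mem measurableSet_Ioc hp) (p.continuous.intervalIntegrable a b)] at h
  exact eq_zero_of_ae_eval_eq_zero (by simpa using hab) h

theorem X_sub_C_pow_dvd_of_iterate_derivative_eval_eq_zero {R : Type*} [CommRing R] [IsDomain R]
    [CharZero R] {p : R[X]} {c : R} {n : ℕ} (h : ∀ i < n, (derivative^[i] p).eval c = 0) :
    (X - C c) ^ n ∣ p := by
  rcases eq_or_ne p 0 with rfl | hp
  · exact dvd_zero _
  rcases n with _ | n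
  · exact one_dvd p
  exact (pow_dvd_pow _ (lt_rootMultiplicity_of_isRoot_iterate_derivative hp
    fun i hi => h i (Nat.lt_succ_of_le hi))).trans (p.pow_rootMultiplicity_dvd c)

theorem mem_degreeLT_of_mul_mem_degreeLT {R : Type*} [Semiring R] [NoZeroDivisors R] {n d : ℕ}
    {D q : R[X]} (hD : D.degree = d) (h : D * q ∈ degreeLT R (n + d)) : q ∈ degreeLT R n := by
  rw [mem_degreeLT, degree_mul, hD, Nat.cast_add, add_comm (n : WithBot ℕ)] at h
  exact mem_degreeLT.2 (lt_of_add_lt_add_left h)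

noncomputable def integralLM (a b : ℝ) : ℝ[X] →ₗ[ℝ] ℝ where
  toFun p := ∫ x in a..b, p.eval x
  map_add' p q := by
    simpa only [eval_add] using
      integral_add (p.continuous.intervalIntegrable a b) (q.continuous.intervalIntegrable a b)
  map_smul' c p := by
    simp only [eval_smul, smul_eq_mul, intervalIntegral.integral_const_mul, RingHom.id_apply]

noncomputable def intervalPairing (a b : ℝ) : ℝ[X] →ₗ[ℝ] ℝ[X] →ₗ[ℝ] ℝ :=
  (LinearMap.mul ℝ ℝ[X]).compr₂ (integralLM a b)

@[simp] theorem intervalPairing_apply (a b : ℝ) (q p : ℝ[X]) :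
    intervalPairing a b q p = ∫ x in a..b, q.eval x * p.eval x := by
  simp [intervalPairing, integralLM]

noncomputable def moments (a b : ℝ) (n : ℕ) : ℝ[X] →ₗ[ℝ] Fin n → ℝ :=
  LinearMap.pi fun i => intervalPairing a b (X ^ (i : ℕ))

@[simp] theorem moments_apply (a b : ℝ) (n : ℕ) (p : ℝ[X]) (i : Fin n) :
    moments a b n p i = ∫ x in a..b, x ^ (i : ℕ) * p.eval x := by
  simp [moments]

theorem intervalPairing_eq_zero_of_moments_eq_zero {a b : ℝ} {n : ℕ} {p q : ℝ[X]}
    (hp : moments a b n p = 0) (hq : q ∈ degreeLT ℝ n) : intervalPairing a b q p = 0 := by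
  classical
  suffices degreeLT ℝ n ≤ LinearMap.ker ((intervalPairing a b).flip p) from this hq
  rw [degreeLT_eq_span_X_pow, Submodule.span_le, Finset.coe_image, Set.image_subset_iff]
  intro i hi
  simpa using congrFun hp ⟨i, Finset.mem_range.1 hi⟩

noncomputable def derivativesAt {R : Type*} [CommSemiring R] (c : R) (n : ℕ) :
    R[X] →ₗ[R] Fin n → R :=
  LinearMap.pi fun i => (leval c).comp (derivative ^ (i : ℕ))

@[simp] theorem derivativesAt_apply {R : Type*} [CommSemiring R] (c : R) (n : ℕ) (p : R[X])
    (i : Fin n) : derivativesAt c n p i = (derivative^[i] p).eval c := by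
  simp [derivativesAt, Module.End.pow_apply]

theorem eq_zero_of_derivativesAt_eq_zero_of_moments_eq_zero {a b : ℝ} (hab : a < b) {j n : ℕ}
    {p : ℝ[X]} (hp : p ∈ degreeLT ℝ (n + 2 * j)) (ha : derivativesAt a j p = 0)
    (hb : derivativesAt b j p = 0) (hmom : moments a b n p = 0) : p = 0 := by
  have hdvd (c : ℝ) (hc : derivativesAt c j p = 0) : (X - C c) ^ j ∣ p :=
    X_sub_C_pow_dvd_of_iterate_derivative_eval_eq_zero fun i hi => by
      simpa using congrFun hc ⟨i, hi⟩
  have hcop : IsCoprime ((X - C a) ^ j) ((X - C b) ^ j) :=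
    (isCoprime_X_sub_C_of_isUnit_sub (sub_ne_zero.2 hab.ne).isUnit).pow
  obtain ⟨q, rfl⟩ := hcop.mul_dvd (hdvd a ha) (hdvd b hb)
  set D := (X - C a) ^ j * (X - C b) ^ j
  have hD : D.degree = ↑(2 * j) := by
    simp only [D, degree_mul, degree_pow, degree_X_sub_C, nsmul_eq_mul, mul_one, Nat.cast_mul,
      Nat.cast_ofNat]
    ring
  have hq : q ∈ degreeLT ℝ n := mem_degreeLT_of_mul_mem_degreeLT hD hp
  have horth := intervalPairing_eq_zero_of_moments_eq_zero hmom hq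
  simp only [intervalPairing_apply, eval_mul] at horth
  have hnonneg (x : ℝ) (hx : x ∈ Ioc a b) : 0 ≤ (C ((-1) ^ j) * (q * (D * q))).eval x := by
    have hsign : (-1 : ℝ) ^ j * (x - b) ^ j = (b - x) ^ j := by rw [← mul_pow]; ring
    have heval : (C ((-1 : ℝ) ^ j) * (q * (D * q))).eval x =
        (x - a) ^ j * (b - x) ^ j * q.eval x ^ 2 := by
      simp only [D, eval_mul, eval_C, eval_pow, eval_sub, eval_X, ← hsign]
      ring
    rw [heval]
    exact mul_nonneg (mul_nonneg (pow_nonneg (sub_nonneg.2 hx.1.le) j)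
      (pow_nonneg (sub_nonneg.2 hx.2) j)) (sq_nonneg _)
  have hzero := eq_zero_of_intervalIntegral_eq_zero_of_nonneg hab hnonneg (by
    simp only [eval_mul, eval_C, intervalIntegral.integral_const_mul, horth, mul_zero])
  simp only [mul_eq_zero, C_eq_zero, pow_eq_zero_iff', neg_eq_zero, one_ne_zero, false_and,
    false_or] at hzero
  rcases hzero with h | h | h <;> simp [h]

noncomputable def boundaryMomentMap (a b : ℝ) (j n : ℕ) :
    degreeLT ℝ (n + 2 * j) →ₗ[ℝ] (Fin j → ℝ) × (Fin j → ℝ) × (Fin n → ℝ) :=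
  ((derivativesAt a j).prod ((derivativesAt b j).prod (moments a b n))).comp (Submodule.subtype _)

@[simp] theorem boundaryMomentMap_apply (a b : ℝ) (j n : ℕ) (p : degreeLT ℝ (n + 2 * j)) :
    boundaryMomentMap a b j n p = (derivativesAt a j p, derivativesAt b j p, moments a b n p) :=
  rfl

theorem bijective_boundaryMomentMap {a b : ℝ} (hab : a < b) (j n : ℕ) :
    Function.Bijective (boundaryMomentMap a b j n) := by
  have hinj : Function.Injective (boundaryMomentMap a b j n) := by
    refine (injective_iff_map_eq_zero _).2 fun p hp => Subtype.ext ?_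
    simp only [boundaryMomentMap_apply, Prod.mk_eq_zero] at hp
    exact eq_zero_of_derivativesAt_eq_zero_of_moments_eq_zero hab p.2 hp.1 hp.2.1 hp.2.2
  have hrank : Module.finrank ℝ (degreeLT ℝ (n + 2 * j)) =
      Module.finrank ℝ ((Fin j → ℝ) × (Fin j → ℝ) × (Fin n → ℝ)) := by
    simp only [(degreeLTEquiv ℝ _).finrank_eq, Module.finrank_prod, Module.finrank_fin_fun]
    ring
  exact ⟨hinj, (LinearMap.injective_iff_surjective_of_finrank_eq_finrank hrank).1 hinj⟩

end Polynomial

theorem diracDeltaKernelCond_iff (m k : ℕ) (P : degreeLT ℝ (m + 1 + 2 * (k + 1))) :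
    DiracDeltaKernelCond m k P ↔
      boundaryMomentMap (-1) 1 (k + 1) (m + 1) P = (0, 0, Pi.single 0 1) := by
  simp only [DiracDeltaKernelCond, boundaryMomentMap_apply, Prod.mk.injEq, funext_iff,
    Fin.forall_iff, Nat.lt_succ_iff, derivativesAt_apply, moments_apply, Pi.zero_apply,
    Pi.single_apply, Fin.ext_iff, forall_and, Fin.val_zero]
  constructor
  · rintro ⟨⟨hright, hleft⟩, hmass, hvanish⟩
    refine ⟨hleft, hright, fun i hi => ?_⟩
    rcases i with _ | i
    · simpa using hmass
    · simpa using hvanish (i + 1) (Nat.succ_pos i) hi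
  · rintro ⟨hleft, hright, hmom⟩
    refine ⟨⟨hright, hleft⟩, by simpa using hmom 0 (Nat.zero_le m), fun i hi him => ?_⟩
    simpa [Nat.one_le_iff_ne_zero.1 hi] using hmom i him

theorem dirac_delta_kernel_exists_unique_general (m k : ℕ) :
    ∃! P : Polynomial ℝ, P.natDegree ≤ m + 2 * (k + 1) ∧ DiracDeltaKernelCond m k P := by
  have hdeg (P : ℝ[X]) :
      P.natDegree ≤ m + 2 * (k + 1) ↔ P ∈ degreeLT ℝ (m + 1 + 2 * (k + 1)) := by
    rw [add_right_comm, degreeLT_succ_eq_degreeLE, mem_degreeLE, natDegree_le_iff_degree_le]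
  obtain ⟨⟨P, hP⟩, hPcond, huniq⟩ :=
    (bijective_boundaryMomentMap (neg_one_lt_zero.trans one_pos) (k + 1) (m + 1)).existsUnique
      (0, 0, Pi.single 0 1)
  refine ⟨P, ⟨(hdeg P).2 hP, (diracDeltaKernelCond_iff m k ⟨P, hP⟩).2 hPcond⟩, ?_⟩
  rintro Q ⟨hQdeg, hQ⟩
  exact congrArg Subtype.val
    (huniq ⟨Q, (hdeg Q).1 hQdeg⟩ ((diracDeltaKernelCond_iff m k ⟨Q, _⟩).1 hQ))

theorem dirac_delta_kernel_exists_unique (m k : ℕ) (hm : 1 ≤ m) :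
    ∃! P : Polynomial ℝ, P.natDegree ≤ m + 2 * (k + 1) ∧ DiracDeltaKernelCond m k P :=
  dirac_delta_kernel_exists_unique_general m k
end

section
/- Let m ≥ 1 be an integer and let P be a real polynomial with ∫_{−1}^{1} P(ξ) dξ = 1 and ∫_{−1}^{1} ξ^i P(ξ) dξ = 0 for i = 1, …, m. Let ε > 0, let x be a real number, and let u : ℝ → ℝ be (m+1)-times continuously differentiable on the interval [x − ε, x + ε] with |u^{(m+1)}(y)| ≤ K for all y in that interval. Then |∫_{−1}^{1} u(x − εξ) P(ξ) dξ − u(x)| ≤ (K ε^{m+1} / (m+1)!) · ∫_{−1}^{1} |ξ|^{m+1} |P(ξ)| dξ. In particular the regularized Dirac-delta approximation has accuracy O(ε^{m+1}) on functions of bounded (m+1)-st derivative. -/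
open Polynomial intervalIntegral

/-!
Let `T` be the Taylor polynomial of degree `m` of `u` at `x`, with derivatives taken within
`[x - ε, x + ε]`. Then `ξ ↦ T (x - ε ξ)` is a polynomial of degree `m` in `ξ` with constant term
`u x`, so unit mass and the vanishing moments of `P` give `∫ T (x - ε ξ) P(ξ) dξ = u x`. The
integral form of the Taylor remainder bounds `|u (x - ε ξ) - T (x - ε ξ)|` by
`K (ε |ξ|)^(m+1) / (m+1)!`, and integrating this against `|P|` gives the estimate.
-/

open Set MeasureTheory
open scoped Nat

theorem abs_integral_abs_pow (n : ℕ) (d : ℝ) :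
    |∫ t in (0 : ℝ)..d, |t| ^ n| = |d| ^ (n + 1) / (n + 1) := by
  have hpos : ∀ d : ℝ, 0 ≤ d → ∫ t in (0 : ℝ)..d, |t| ^ n = d ^ (n + 1) / (n + 1) := by
    intro d hd
    rw [integral_congr (g := fun t => t ^ n) fun t ht => by
      rw [uIcc_of_le hd] at ht; rw [abs_of_nonneg ht.1], integral_pow,
      zero_pow n.succ_ne_zero, sub_zero]
  rcases le_total 0 d with hd | hd
  · rw [hpos d hd, abs_of_nonneg hd, abs_of_nonneg (by positivity)]
  · have hneg : ∫ t in (0 : ℝ)..d, |t| ^ n = -∫ t in (0 : ℝ)..-d, |t| ^ n := by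
      calc ∫ t in (0 : ℝ)..d, |t| ^ n = ∫ t in (0 : ℝ)..d, |-t| ^ n := by simp_rw [abs_neg]
        _ = ∫ t in -d..-0, |t| ^ n := integral_comp_neg fun t => |t| ^ n
        _ = -∫ t in (0 : ℝ)..-d, |t| ^ n := by rw [neg_zero, integral_symm]
    rw [hneg, abs_neg, hpos (-d) (by linarith), abs_of_nonpos hd,
      abs_of_nonneg (div_nonneg (pow_nonneg (neg_nonneg.2 hd) _) (by positivity))]

section Taylor

variable {E : Type*} [NormedAddCommGroup E] [NormedSpace ℝ E]
  {u : ℝ → E} {a b c y : ℝ} {n : ℕ}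

theorem continuous_taylorWithinEval (u : ℝ → E) (n : ℕ) (s : Set ℝ) (c : ℝ) :
    Continuous (taylorWithinEval u n s c) := by
  rw [show taylorWithinEval u n s c = _ from funext (taylor_within_apply u n s c)]
  fun_prop

/- Unlike `taylor_integral_remainder`, the derivatives are taken within a fixed interval containing
both `c` and `y`, so that one Taylor polynomial serves all evaluation points `y`. -/
theorem sub_taylorWithinEval_Icc_eq_integral [CompleteSpace E] (hab : a < b)
    (hu : ContDiffOn ℝ (n + 1 : ℕ) u (Icc a b)) (hc : c ∈ Icc a b) (hy : y ∈ Icc a b) :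
    u y - taylorWithinEval u n (Icc a b) c y =
      ∫ t in c..y, ((n ! : ℝ)⁻¹ * (y - t) ^ n) • iteratedDerivWithin (n + 1) u (Icc a b) t := by
  have hs : UniqueDiffOn ℝ (Icc a b) := uniqueDiffOn_Icc hab
  have hsub : uIcc c y ⊆ Icc a b := uIcc_subset_Icc hc hy
  have hu_n : ContDiffOn ℝ n u (Icc a b) := hu.of_le (by norm_cast; omega)
  have hderiv : ∀ t ∈ Ioo (min c y) (max c y),
      HasDerivWithinAt (fun t => taylorWithinEval u n (Icc a b) t y)
        (((n ! : ℝ)⁻¹ * (y - t) ^ n) • iteratedDerivWithin (n + 1) u (Icc a b) t) (Ioi t) t := by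
    intro t ht
    have ht' : t ∈ Ioo a b := ⟨(le_min hc.1 hy.1).trans_lt ht.1, ht.2.trans_le (max_le hc.2 hy.2)⟩
    exact ((hasDerivWithinAt_taylorWithinEval_at_Icc y hab (Ioo_subset_Icc_self ht') hu_n
      (hu.differentiableOn_iteratedDerivWithin (by norm_cast; omega) hs)).hasDerivAt
        (Icc_mem_nhds ht'.1 ht'.2)).hasDerivWithinAt
  have hcont : ContinuousOn (fun t => ((n ! : ℝ)⁻¹ * (y - t) ^ n) •
      iteratedDerivWithin (n + 1) u (Icc a b) t) (uIcc c y) :=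
    (ContinuousOn.smul (by fun_prop) (hu.continuousOn_iteratedDerivWithin le_rfl hs)).mono hsub
  rw [integral_eq_sub_of_hasDeriv_right ((continuousOn_taylorWithinEval hs hu_n).mono hsub)
    hderiv hcont.intervalIntegrable, taylorWithinEval_self]

theorem norm_sub_taylorWithinEval_Icc_le [CompleteSpace E] {K : ℝ} (hab : a < b)
    (hu : ContDiffOn ℝ (n + 1 : ℕ) u (Icc a b))
    (hK : ∀ t ∈ Icc a b, ‖iteratedDerivWithin (n + 1) u (Icc a b) t‖ ≤ K)
    (hc : c ∈ Icc a b) (hy : y ∈ Icc a b) :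
    ‖u y - taylorWithinEval u n (Icc a b) c y‖ ≤ K * |y - c| ^ (n + 1) / (n + 1)! := by
  have hK0 : 0 ≤ K := (norm_nonneg _).trans (hK c hc)
  rw [sub_taylorWithinEval_Icc_eq_integral hab hu hc hy]
  calc _ ≤ |∫ t in c..y, (n ! : ℝ)⁻¹ * K * |y - t| ^ n| := by
        refine norm_integral_le_abs_of_norm_le ?_ (Continuous.intervalIntegrable (by fun_prop) _ _)
        refine (ae_restrict_mem measurableSet_uIoc).mono fun t ht => ?_
        rw [norm_smul, norm_mul, norm_inv, norm_pow, Real.norm_natCast, Real.norm_eq_abs,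
          mul_right_comm _ K]
        gcongr
        exact hK t (uIcc_subset_Icc hc hy (uIoc_subset_uIcc ht))
    _ = K * |y - c| ^ (n + 1) / (n + 1)! := by
        rw [intervalIntegral.integral_const_mul, integral_comp_sub_left (fun t => |t| ^ n),
          sub_self, abs_mul, abs_integral_abs_pow, abs_of_nonneg (by positivity),
          Nat.factorial_succ]
        push_cast
        field_simp

theorem sub_mul_mem_Icc {x ε ξ : ℝ} (hε : 0 ≤ ε) (hξ : ξ ∈ Icc (-1) 1) :
    x - ε * ξ ∈ Icc (x - ε) (x + ε) := by
  constructor <;> nlinarith [hξ.1, hξ.2]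

theorem norm_sub_taylorWithinEval_sub_mul_le [CompleteSpace E] {x ε K ξ : ℝ} (hε : 0 < ε)
    (hu : ContDiffOn ℝ (n + 1 : ℕ) u (Icc (x - ε) (x + ε)))
    (hK : ∀ t ∈ Icc (x - ε) (x + ε), ‖iteratedDerivWithin (n + 1) u (Icc (x - ε) (x + ε)) t‖ ≤ K)
    (hξ : ξ ∈ Icc (-1) 1) :
    ‖u (x - ε * ξ) - taylorWithinEval u n (Icc (x - ε) (x + ε)) x (x - ε * ξ)‖ ≤
      K * ε ^ (n + 1) / (n + 1)! * |ξ| ^ (n + 1) := by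
  have hx : x ∈ Icc (x - ε) (x + ε) := ⟨by linarith, by linarith⟩
  calc _ ≤ K * |x - ε * ξ - x| ^ (n + 1) / (n + 1)! :=
        norm_sub_taylorWithinEval_Icc_le (by linarith) hu hK hx (sub_mul_mem_Icc hε.le hξ)
    _ = _ := by
        rw [show x - ε * ξ - x = -(ε * ξ) by ring, abs_neg, abs_mul, abs_of_pos hε, mul_pow]
        ring

end Taylor

section Moments

variable {w : ℝ → ℝ} {α β : ℝ} {m : ℕ}

theorem integral_sum_pow_mul_eq_coeff_zero (hw : IntervalIntegrable w volume α β)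
    (hmass : ∫ ξ in α..β, w ξ = 1)
    (hmom : ∀ i, 1 ≤ i → i ≤ m → ∫ ξ in α..β, ξ ^ i * w ξ = 0) (p : ℕ → ℝ) :
    ∫ ξ in α..β, (∑ k ∈ Finset.range (m + 1), p k * ξ ^ k) * w ξ = p 0 := by
  simp_rw [Finset.sum_mul, mul_assoc]
  rw [integral_finsetSum fun k _ => (hw.continuousOn_mul (by fun_prop)).const_mul (p k),
    Finset.sum_eq_single_of_mem 0 (by simp)]
  · simp [hmass]
  · intro k hk hk0
    rw [intervalIntegral.integral_const_mul, hmom k (by omega) (by simp at hk; omega), mul_zero]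

theorem integral_taylorWithinEval_mul_eq (hw : IntervalIntegrable w volume α β)
    (hmass : ∫ ξ in α..β, w ξ = 1)
    (hmom : ∀ i, 1 ≤ i → i ≤ m → ∫ ξ in α..β, ξ ^ i * w ξ = 0)
    (u : ℝ → ℝ) (s : Set ℝ) (x ε : ℝ) :
    ∫ ξ in α..β, taylorWithinEval u m s x (x - ε * ξ) * w ξ = u x := by
  have hexpand : ∀ ξ, taylorWithinEval u m s x (x - ε * ξ) =
      ∑ k ∈ Finset.range (m + 1),
        ((k ! : ℝ)⁻¹ * (-ε) ^ k * iteratedDerivWithin k u s x) * ξ ^ k := by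
    intro ξ
    rw [taylor_within_apply]
    refine Finset.sum_congr rfl fun k _ => ?_
    rw [smul_eq_mul, show x - ε * ξ - x = -ε * ξ by ring, mul_pow]
    ring
  simp_rw [hexpand]
  rw [integral_sum_pow_mul_eq_coeff_zero hw hmass hmom]
  simp

end Moments

theorem dirac_delta_filter_accuracy_general (m : ℕ) (P : Polynomial ℝ)
    (hmass : (∫ ξ in (-1 : ℝ)..1, P.eval ξ) = 1)
    (hmom : ∀ i, 1 ≤ i → i ≤ m → (∫ ξ in (-1 : ℝ)..1, ξ ^ i * P.eval ξ) = 0)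
    (ε : ℝ) (hε : 0 < ε) (x : ℝ) (u : ℝ → ℝ) (K : ℝ)
    (hu : ContDiffOn ℝ (m + 1 : ℕ) u (Set.Icc (x - ε) (x + ε)))
    (hK : ∀ y ∈ Set.Icc (x - ε) (x + ε),
      |iteratedDerivWithin (m + 1) u (Set.Icc (x - ε) (x + ε)) y| ≤ K) :
    |(∫ ξ in (-1 : ℝ)..1, u (x - ε * ξ) * P.eval ξ) - u x| ≤
      K * ε ^ (m + 1) / (Nat.factorial (m + 1)) *
        ∫ ξ in (-1 : ℝ)..1, |ξ| ^ (m + 1) * |P.eval ξ| := by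
  set T := taylorWithinEval u m (Icc (x - ε) (x + ε)) x
  have hP : IntervalIntegrable P.eval volume (-1) 1 := P.continuous.intervalIntegrable _ _
  have hu_int : IntervalIntegrable (fun ξ => u (x - ε * ξ) * P.eval ξ) volume (-1) 1 := by
    refine hP.continuousOn_mul ?_
    rw [uIcc_of_le (by norm_num)]
    exact hu.continuousOn.comp (by fun_prop) fun ξ hξ => sub_mul_mem_Icc hε.le hξ
  have hT_int : IntervalIntegrable (fun ξ => T (x - ε * ξ) * P.eval ξ) volume (-1) 1 :=
    hP.continuousOn_mul ((continuous_taylorWithinEval _ _ _ _).comp (by fun_prop)).continuousOn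
  calc |(∫ ξ in (-1 : ℝ)..1, u (x - ε * ξ) * P.eval ξ) - u x|
      = ‖∫ ξ in (-1 : ℝ)..1, (u (x - ε * ξ) - T (x - ε * ξ)) * P.eval ξ‖ := by
        simp_rw [sub_mul]
        rw [integral_sub hu_int hT_int, integral_taylorWithinEval_mul_eq hP hmass hmom,
          Real.norm_eq_abs]
    _ ≤ ∫ ξ in (-1 : ℝ)..1, K * ε ^ (m + 1) / (m + 1)! * |ξ| ^ (m + 1) * |P.eval ξ| := by
        refine norm_integral_le_of_norm_le (by norm_num) (ae_of_all _ fun ξ hξ => ?_)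
          (Continuous.intervalIntegrable (by fun_prop) _ _)
        rw [norm_mul, Real.norm_eq_abs (P.eval ξ)]
        exact mul_le_mul_of_nonneg_right (norm_sub_taylorWithinEval_sub_mul_le hε hu hK
          (Ioc_subset_Icc_self hξ)) (abs_nonneg _)
    _ = _ := by simp_rw [mul_assoc _ (|_| ^ _)]; exact intervalIntegral.integral_const_mul _ _

theorem dirac_delta_filter_accuracy (m : ℕ) (hm : 1 ≤ m) (P : Polynomial ℝ)
    (hmass : (∫ ξ in (-1 : ℝ)..1, P.eval ξ) = 1)
    (hmom : ∀ i, 1 ≤ i → i ≤ m → (∫ ξ in (-1 : ℝ)..1, ξ ^ i * P.eval ξ) = 0)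
    (ε : ℝ) (hε : 0 < ε) (x : ℝ) (u : ℝ → ℝ) (K : ℝ)
    (hu : ContDiffOn ℝ (m + 1 : ℕ) u (Set.Icc (x - ε) (x + ε)))
    (hK : ∀ y ∈ Set.Icc (x - ε) (x + ε),
      |iteratedDerivWithin (m + 1) u (Set.Icc (x - ε) (x + ε)) y| ≤ K) :
    |(∫ ξ in (-1 : ℝ)..1, u (x - ε * ξ) * P.eval ξ) - u x| ≤
      K * ε ^ (m + 1) / (Nat.factorial (m + 1)) *
        ∫ ξ in (-1 : ℝ)..1, |ξ| ^ (m + 1) * |P.eval ξ| :=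
  dirac_delta_filter_accuracy_general m P hmass hmom ε hε x u K hu hK
end

section
/- Let m ≥ 1 be an integer and let P be a real polynomial with ∫_{−1}^{1} P(ξ) dξ = 1 and ∫_{−1}^{1} ξ^i P(ξ) dξ = 0 for i = 1, …, m. Then there exists a constant C, depending only on P and m, such that for every ε > 0, every point (x, y) ∈ ℝ², and every function f : ℝ² → ℝ that is (m+1)-times continuously differentiable on the square [x − ε, x + ε] × [y − ε, y + ε] with all partial derivatives of total order m+1 bounded in absolute value by K there, one has |∫_{−1}^{1} ∫_{−1}^{1} f(x − ετ, y − εη) P(τ) P(η) dτ dη − f(x, y)| ≤ C K ε^{m+1}. -/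
/-!
Because `P` has unit mass and vanishing moments of orders `1, …, m`, filtering reproduces
polynomials of degree `≤ m`. In one variable the filtering error of a function `h` at `z` is
therefore the filtered Taylor remainder of `h` about `z - ε`, which is at most `(‖P‖₁ + 1) K (2ε)^(m+1)`.
In two variables, write
`∫∫ f(x-ετ, y-εη) P(τ) P(η) - f(x,y) = ∫ [∫ f(x-ετ, y-εη) P(η) dη - f(x-ετ, y)] P(τ) dτ
  + [∫ f(x-ετ, y) P(τ) dτ - f(x,y)]`
and apply the one-dimensional estimate to every row and to the column through `(x, y)`;
only the pure derivatives `∂ₓ^(m+1) f` and `∂ᵧ^(m+1) f` enter.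
-/

open Polynomial intervalIntegral Set MeasureTheory

theorem HasFTaylorSeriesUpToOn.comp_const_add {E F : Type*} [NormedAddCommGroup E]
    [NormedSpace ℝ E] [NormedAddCommGroup F] [NormedSpace ℝ F] {n : WithTop ℕ∞} {f : E → F}
    {p : E → FormalMultilinearSeries ℝ E F} {s : Set E}
    (hf : HasFTaylorSeriesUpToOn n f p s) (c : E) :
    HasFTaylorSeriesUpToOn n (fun z => f (c + z)) (fun z => p (c + z)) ((c + ·) ⁻¹' s) := by
  refine ⟨fun x hx => hf.zero_eq _ hx, fun k hk x hx => ?_, fun k hk => ?_⟩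
  · have hshift : HasFDerivWithinAt (c + ·) (ContinuousLinearMap.id ℝ E) ((c + ·) ⁻¹' s) x :=
      ((hasFDerivAt_id x).const_add c).hasFDerivWithinAt
    simpa [Function.comp_def] using
      (hf.fderivWithin k hk (c + x) hx).comp x hshift (mapsTo_preimage _ _)
  · exact (hf.cont k hk).comp (by fun_prop) (mapsTo_preimage _ _)

theorem iteratedDerivWithin_comp_add_smul {E F : Type*} [NormedAddCommGroup E]
    [NormedSpace ℝ E] [NormedAddCommGroup F] [NormedSpace ℝ F] {n : ℕ} {f : E → F} {s : Set E}
    (hs : UniqueDiffOn ℝ s) (hf : ContDiffOn ℝ n f s) (c v : E) {t : Set ℝ}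
    (ht : UniqueDiffOn ℝ t) (hts : MapsTo (fun u => c + u • v) t s) {u : ℝ} (hu : u ∈ t) :
    iteratedDerivWithin n (fun u => f (c + u • v)) t u =
      iteratedFDerivWithin ℝ n f s (c + u • v) (fun _ => v) := by
  have hseries : HasFTaylorSeriesUpToOn n (fun u => f (c + u • v)) _ t :=
    (((hf.ftaylorSeriesWithin hs).comp_const_add c).compContinuousLinearMap
      ((ContinuousLinearMap.id ℝ ℝ).smulRight v)).mono fun u hu => hts hu
  rw [iteratedDerivWithin_eq_iteratedFDerivWithin,
    ← hseries.eq_iteratedFDerivWithin_of_uniqueDiffOn le_rfl ht hu]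
  simp [ftaylorSeriesWithin]

theorem iteratedDerivWithin_comp_prodMk_left {E F : Type*} [NormedAddCommGroup E]
    [NormedSpace ℝ E] [NormedAddCommGroup F] [NormedSpace ℝ F] {n : ℕ} {f : E × ℝ → F}
    {s : Set E} {t : Set ℝ} (hst : UniqueDiffOn ℝ (s ×ˢ t)) (hf : ContDiffOn ℝ n f (s ×ˢ t))
    (ht : UniqueDiffOn ℝ t) {a : E} (ha : a ∈ s) {u : ℝ} (hu : u ∈ t) :
    iteratedDerivWithin n (fun u => f (a, u)) t u =
      iteratedFDerivWithin ℝ n f (s ×ˢ t) (a, u) (fun _ => (0, 1)) := by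
  simpa using iteratedDerivWithin_comp_add_smul hst hf (a, 0) (0, 1) ht
    (fun u hu => by simpa using ⟨ha, hu⟩) hu

theorem iteratedDerivWithin_comp_prodMk_right {E F : Type*} [NormedAddCommGroup E]
    [NormedSpace ℝ E] [NormedAddCommGroup F] [NormedSpace ℝ F] {n : ℕ} {f : ℝ × E → F}
    {s : Set ℝ} {t : Set E} (hst : UniqueDiffOn ℝ (s ×ˢ t)) (hf : ContDiffOn ℝ n f (s ×ˢ t))
    (hs : UniqueDiffOn ℝ s) {b : E} (hb : b ∈ t) {u : ℝ} (hu : u ∈ s) :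
    iteratedDerivWithin n (fun u => f (u, b)) s u =
      iteratedFDerivWithin ℝ n f (s ×ˢ t) (u, b) (fun _ => (1, 0)) := by
  simpa using iteratedDerivWithin_comp_add_smul hst hf (0, b) (1, 0) hs
    (fun u hu => by simpa using ⟨hu, hb⟩) hu

theorem continuousOn_intervalIntegral_of_continuousOn_prod {E : Type*} [NormedAddCommGroup E]
    [NormedSpace ℝ E] {F : ℝ → ℝ → E} {a b c d : ℝ} (hab : a ≤ b) (hcd : c ≤ d)
    (hF : ContinuousOn (Function.uncurry F) (Icc a b ×ˢ Icc c d)) :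
    ContinuousOn (fun τ => ∫ η in c..d, F τ η) (Icc a b) := by
  set G : ℝ → ℝ → E := fun τ η => F (projIcc a b hab τ) (projIcc c d hcd η)
  have hG : Continuous (Function.uncurry G) :=
    hF.comp_continuous
      (f := fun p : ℝ × ℝ => ((projIcc a b hab p.1 : ℝ), (projIcc c d hcd p.2 : ℝ))) (by fun_prop)
      fun p => ⟨(projIcc a b hab p.1).2, (projIcc c d hcd p.2).2⟩
  refine (continuous_parametric_intervalIntegral_of_continuous' hG c d).continuousOn.congr
    fun τ hτ => integral_congr fun η hη => ?_
  rw [uIcc_of_le hcd] at hη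
  simp [G, projIcc_of_mem hab hτ, projIcc_of_mem hcd hη]

theorem continuous_taylorWithinEval_s7 {E : Type*} [NormedAddCommGroup E] [NormedSpace ℝ E]
    (f : ℝ → E) (n : ℕ) (s : Set ℝ) (x₀ : ℝ) : Continuous (taylorWithinEval f n s x₀) := by
  simp_rw [funext (taylor_within_apply f n s x₀)]
  fun_prop

theorem norm_sub_taylorWithinEval_le {E : Type*} [NormedAddCommGroup E] [NormedSpace ℝ E]
    {f : ℝ → E} {a b C x : ℝ} {n : ℕ} (hab : a ≤ b)
    (hf : ContDiffOn ℝ (n + 1 : ℕ) f (Icc a b)) (hx : x ∈ Icc a b)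
    (hC : ∀ y ∈ Icc a b, ‖iteratedDerivWithin (n + 1) f (Icc a b) y‖ ≤ C) :
    ‖f x - taylorWithinEval f n (Icc a b) a x‖ ≤ C * (b - a) ^ (n + 1) := by
  have hC0 : 0 ≤ C := (norm_nonneg _).trans (hC a (left_mem_Icc.2 hab))
  have hxa : 0 ≤ x - a := sub_nonneg.2 hx.1
  calc ‖f x - taylorWithinEval f n (Icc a b) a x‖ ≤ C * (x - a) ^ (n + 1) / n.factorial :=
        taylor_mean_remainder_bound hab hf hx hC
    _ ≤ C * (x - a) ^ (n + 1) :=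
        div_le_self (by positivity) (by exact_mod_cast n.factorial_pos)
    _ ≤ C * (b - a) ^ (n + 1) := by gcongr; exact hx.2

theorem mapsTo_sub_mul_Icc {ε : ℝ} (hε : 0 ≤ ε) (c : ℝ) :
    MapsTo (fun τ => c - ε * τ) (Icc (-1) 1) (Icc (c - ε) (c + ε)) :=
  fun _ hτ => ⟨by nlinarith [hτ.2], by nlinarith [hτ.1]⟩

theorem abs_integral_mul_sub_integral_mul_le {G H w : ℝ → ℝ} {a b δ : ℝ} (hab : a ≤ b)
    (hG : IntervalIntegrable (fun t => G t * w t) volume a b)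
    (hH : IntervalIntegrable (fun t => H t * w t) volume a b)
    (hw : IntervalIntegrable w volume a b) (hGH : ∀ t ∈ Icc a b, |G t - H t| ≤ δ) :
    |(∫ t in a..b, G t * w t) - ∫ t in a..b, H t * w t| ≤ δ * ∫ t in a..b, |w t| := by
  rw [← integral_sub hG hH, ← intervalIntegral.integral_const_mul]
  refine (abs_integral_le_integral_abs hab).trans <|
    integral_mono_on hab (hG.sub hH).abs (hw.abs.const_mul δ) fun t ht => ?_
  rw [← sub_mul, abs_mul]
  exact mul_le_mul_of_nonneg_right (hGH t ht) (abs_nonneg _)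

def IsMomentKernel (w : ℝ → ℝ) (m : ℕ) : Prop :=
  ∀ k ≤ m, ∫ τ in (-1 : ℝ)..1, τ ^ k * w τ = if k = 0 then 1 else 0

namespace IsMomentKernel

variable {w : ℝ → ℝ} {m : ℕ}

theorem integral_add_mul_pow_mul (hw : IsMomentKernel w m) (hwc : Continuous w) {k : ℕ}
    (hk : k ≤ m) (A c : ℝ) : ∫ τ in (-1 : ℝ)..1, (A + c * τ) ^ k * w τ = A ^ k := by
  calc ∫ τ in (-1 : ℝ)..1, (A + c * τ) ^ k * w τ
      = ∫ τ in (-1 : ℝ)..1, ∑ j ∈ Finset.range (k + 1),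
          c ^ j * A ^ (k - j) * k.choose j * (τ ^ j * w τ) := by
        refine integral_congr fun τ _ => ?_
        rw [add_comm A, add_pow, Finset.sum_mul]
        exact Finset.sum_congr rfl fun j _ => by ring
    _ = ∑ j ∈ Finset.range (k + 1), c ^ j * A ^ (k - j) * k.choose j *
          ∫ τ in (-1 : ℝ)..1, τ ^ j * w τ := by
        rw [integral_finsetSum fun j _ => (by fun_prop : Continuous _).intervalIntegrable _ _]
        simp only [intervalIntegral.integral_const_mul]
    _ = A ^ k := by
        rw [Finset.sum_eq_single_of_mem 0 (by simp) fun j hj hj0 => by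
          rw [hw j (by linarith [Finset.mem_range.1 hj]), if_neg hj0, mul_zero],
          hw 0 (Nat.zero_le m)]
        simp

theorem integral_taylorWithinEval_mul (hw : IsMomentKernel w m) (hwc : Continuous w)
    (h : ℝ → ℝ) (s : Set ℝ) (x₀ z ε : ℝ) :
    ∫ τ in (-1 : ℝ)..1, taylorWithinEval h m s x₀ (z - ε * τ) * w τ =
      taylorWithinEval h m s x₀ z := by
  simp only [taylor_within_apply, smul_eq_mul, Finset.sum_mul]
  rw [integral_finsetSum fun k _ => (by fun_prop : Continuous _).intervalIntegrable _ _]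
  refine Finset.sum_congr rfl fun k hk => ?_
  have hkm : k ≤ m := Nat.lt_succ_iff.1 (Finset.mem_range.1 hk)
  calc ∫ τ in (-1 : ℝ)..1, (k.factorial : ℝ)⁻¹ * (z - ε * τ - x₀) ^ k *
        iteratedDerivWithin k h s x₀ * w τ
      = ∫ τ in (-1 : ℝ)..1, ((k.factorial : ℝ)⁻¹ * iteratedDerivWithin k h s x₀) *
          ((z - x₀ + -ε * τ) ^ k * w τ) :=
        integral_congr fun τ _ => by ring
    _ = (k.factorial : ℝ)⁻¹ * (z - x₀) ^ k * iteratedDerivWithin k h s x₀ := by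
        rw [intervalIntegral.integral_const_mul, hw.integral_add_mul_pow_mul hwc hkm]
        ring

theorem abs_integral_comp_sub_mul_sub_le (hw : IsMomentKernel w m) (hwc : Continuous w)
    {h : ℝ → ℝ} {z ε K : ℝ} (hε : 0 ≤ ε)
    (hh : ContDiffOn ℝ (m + 1 : ℕ) h (Icc (z - ε) (z + ε)))
    (hK : ∀ u ∈ Icc (z - ε) (z + ε),
      |iteratedDerivWithin (m + 1) h (Icc (z - ε) (z + ε)) u| ≤ K) :
    |(∫ τ in (-1 : ℝ)..1, h (z - ε * τ) * w τ) - h z| ≤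
      ((∫ τ in (-1 : ℝ)..1, |w τ|) + 1) * (K * (2 * ε) ^ (m + 1)) := by
  set T := taylorWithinEval h m (Icc (z - ε) (z + ε)) (z - ε)
  have hzε : z - ε ≤ z + ε := by linarith
  have hrem : ∀ u ∈ Icc (z - ε) (z + ε), |h u - T u| ≤ K * (2 * ε) ^ (m + 1) := fun u hu => by
    simpa [show z + ε - (z - ε) = 2 * ε by ring] using norm_sub_taylorWithinEval_le hzε hh hu hK
  have hmaps := mapsTo_sub_mul_Icc hε z
  have hT : ∫ τ in (-1 : ℝ)..1, T (z - ε * τ) * w τ = T z :=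
    hw.integral_taylorWithinEval_mul hwc _ _ _ _ _
  have hintT : IntervalIntegrable (fun τ => T (z - ε * τ) * w τ) volume (-1) 1 :=
    (((continuous_taylorWithinEval_s7 _ _ _ _).comp (by fun_prop : Continuous fun τ => z - ε * τ)).mul
      hwc).intervalIntegrable _ _
  have hint : IntervalIntegrable (fun τ => h (z - ε * τ) * w τ) volume (-1) 1 :=
    ((hh.continuousOn.comp (by fun_prop) hmaps).mul hwc.continuousOn).intervalIntegrable_of_Icc
      (by norm_num)
  calc |(∫ τ in (-1 : ℝ)..1, h (z - ε * τ) * w τ) - h z|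
      = |((∫ τ in (-1 : ℝ)..1, h (z - ε * τ) * w τ) - ∫ τ in (-1 : ℝ)..1, T (z - ε * τ) * w τ) +
          (T z - h z)| := by
        rw [hT, sub_add_sub_cancel]
    _ ≤ K * (2 * ε) ^ (m + 1) * (∫ τ in (-1 : ℝ)..1, |w τ|) + K * (2 * ε) ^ (m + 1) :=
        (abs_add_le _ _).trans <| add_le_add
          (abs_integral_mul_sub_integral_mul_le (by norm_num) hint hintT
            (hwc.intervalIntegrable _ _) fun τ hτ => hrem _ (hmaps hτ))
          (by rw [abs_sub_comm]; exact hrem z ⟨by linarith, by linarith⟩)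
    _ = ((∫ τ in (-1 : ℝ)..1, |w τ|) + 1) * (K * (2 * ε) ^ (m + 1)) := by ring

end IsMomentKernel

theorem abs_integral_integral_mul_sub_le {w : ℝ → ℝ} (hw : Continuous w) {f : ℝ × ℝ → ℝ}
    {x y ε δ : ℝ} (hε : 0 ≤ ε) (hf : ContinuousOn f (Icc (x - ε) (x + ε) ×ˢ Icc (y - ε) (y + ε)))
    (hrow : ∀ a ∈ Icc (x - ε) (x + ε),
      |(∫ η in (-1 : ℝ)..1, f (a, y - ε * η) * w η) - f (a, y)| ≤ δ)
    (hcol : |(∫ τ in (-1 : ℝ)..1, f (x - ε * τ, y) * w τ) - f (x, y)| ≤ δ) :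
    |(∫ τ in (-1 : ℝ)..1, ∫ η in (-1 : ℝ)..1, f (x - ε * τ, y - ε * η) * (w τ * w η)) -
        f (x, y)| ≤ ((∫ τ in (-1 : ℝ)..1, |w τ|) + 1) * δ := by
  have hmaps := mapsTo_sub_mul_Icc hε
  set I : ℝ → ℝ := fun τ => ∫ η in (-1 : ℝ)..1, f (x - ε * τ, y - ε * η) * w η
  have hI : ContinuousOn I (Icc (-1) 1) :=
    continuousOn_intervalIntegral_of_continuousOn_prod (by norm_num) (by norm_num) <|
      (hf.comp (by fun_prop) fun p hp => ⟨hmaps x hp.1, hmaps y hp.2⟩).mul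
        (hw.comp continuous_snd).continuousOn
  have hrows : ∀ τ ∈ Icc (-1 : ℝ) 1, |I τ - f (x - ε * τ, y)| ≤ δ :=
    fun τ hτ => hrow _ (hmaps x hτ)
  have hsplit : (∫ τ in (-1 : ℝ)..1, ∫ η in (-1 : ℝ)..1, f (x - ε * τ, y - ε * η) * (w τ * w η)) =
      ∫ τ in (-1 : ℝ)..1, I τ * w τ :=
    integral_congr fun τ _ => by
      simp only [I, ← intervalIntegral.integral_mul_const, mul_assoc, mul_comm (w τ)]
  rw [hsplit]
  calc |(∫ τ in (-1 : ℝ)..1, I τ * w τ) - f (x, y)|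
      ≤ |(∫ τ in (-1 : ℝ)..1, I τ * w τ) - ∫ τ in (-1 : ℝ)..1, f (x - ε * τ, y) * w τ| +
          |(∫ τ in (-1 : ℝ)..1, f (x - ε * τ, y) * w τ) - f (x, y)| := abs_sub_le _ _ _
    _ ≤ δ * (∫ τ in (-1 : ℝ)..1, |w τ|) + δ :=
        add_le_add (abs_integral_mul_sub_integral_mul_le (by norm_num)
          ((hI.mul hw.continuousOn).intervalIntegrable_of_Icc (by norm_num))
          (((hf.comp (by fun_prop) fun τ hτ => ⟨hmaps x hτ, by constructor <;> linarith⟩)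
            |>.mul hw.continuousOn).intervalIntegrable_of_Icc (by norm_num))
          (hw.intervalIntegrable _ _) hrows) hcol
    _ = ((∫ τ in (-1 : ℝ)..1, |w τ|) + 1) * δ := by ring

theorem tensor_product_filter_accuracy_general (m : ℕ) (P : Polynomial ℝ)
    (hmass : (∫ ξ in (-1 : ℝ)..1, P.eval ξ) = 1)
    (hmom : ∀ i, 1 ≤ i → i ≤ m → (∫ ξ in (-1 : ℝ)..1, ξ ^ i * P.eval ξ) = 0) :
    ∃ C : ℝ, ∀ ε : ℝ, 0 < ε → ∀ x y : ℝ, ∀ K : ℝ, ∀ f : ℝ × ℝ → ℝ,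
      ContDiffOn ℝ (m + 1 : ℕ) f (Set.Icc (x - ε) (x + ε) ×ˢ Set.Icc (y - ε) (y + ε)) →
      (∀ p ∈ Set.Icc (x - ε) (x + ε) ×ˢ Set.Icc (y - ε) (y + ε),
        ∀ v : Fin (m + 1) → ℝ × ℝ, (∀ i, v i = (1, 0) ∨ v i = (0, 1)) →
          |iteratedFDerivWithin ℝ (m + 1) f
              (Set.Icc (x - ε) (x + ε) ×ˢ Set.Icc (y - ε) (y + ε)) p v| ≤ K) →
      |(∫ τ in (-1 : ℝ)..1, ∫ η in (-1 : ℝ)..1,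
          f (x - ε * τ, y - ε * η) * (P.eval τ * P.eval η)) - f (x, y)| ≤
        C * K * ε ^ (m + 1) := by
  have hP : IsMomentKernel P.eval m := fun k hk => by
    rcases Nat.eq_zero_or_pos k with rfl | hk0
    · simpa using hmass
    · rw [if_neg hk0.ne', hmom k hk0 hk]
  set Q := ∫ τ in (-1 : ℝ)..1, |P.eval τ|
  refine ⟨(Q + 1) ^ 2 * 2 ^ (m + 1), fun ε hε x y K f hf hK => ?_⟩
  have hIx := uniqueDiffOn_Icc (show x - ε < x + ε by linarith)
  have hIy := uniqueDiffOn_Icc (show y - ε < y + ε by linarith)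
  have hy : y ∈ Icc (y - ε) (y + ε) := ⟨by linarith, by linarith⟩
  have hrow : ∀ a ∈ Icc (x - ε) (x + ε),
      |(∫ η in (-1 : ℝ)..1, f (a, y - ε * η) * P.eval η) - f (a, y)| ≤
        (Q + 1) * (K * (2 * ε) ^ (m + 1)) := fun a ha => by
    have hsec : ContDiffOn ℝ (m + 1 : ℕ) (fun u => f (a, u)) (Icc (y - ε) (y + ε)) :=
      hf.comp (by fun_prop) fun u hu => ⟨ha, hu⟩
    refine hP.abs_integral_comp_sub_mul_sub_le P.continuous hε.le hsec fun u hu => ?_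
    rw [iteratedDerivWithin_comp_prodMk_left (hIx.prod hIy) hf hIy ha hu]
    exact hK _ ⟨ha, hu⟩ _ fun _ => Or.inr rfl
  have hcol : |(∫ τ in (-1 : ℝ)..1, f (x - ε * τ, y) * P.eval τ) - f (x, y)| ≤
      (Q + 1) * (K * (2 * ε) ^ (m + 1)) := by
    have hsec : ContDiffOn ℝ (m + 1 : ℕ) (fun u => f (u, y)) (Icc (x - ε) (x + ε)) :=
      hf.comp (by fun_prop) fun u hu => ⟨hu, hy⟩
    refine hP.abs_integral_comp_sub_mul_sub_le P.continuous hε.le hsec fun u hu => ?_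
    rw [iteratedDerivWithin_comp_prodMk_right (hIx.prod hIy) hf hIx hy hu]
    exact hK _ ⟨hu, hy⟩ _ fun _ => Or.inl rfl
  calc _ ≤ (Q + 1) * ((Q + 1) * (K * (2 * ε) ^ (m + 1))) :=
        abs_integral_integral_mul_sub_le P.continuous hε.le hf.continuousOn hrow hcol
    _ = (Q + 1) ^ 2 * 2 ^ (m + 1) * K * ε ^ (m + 1) := by ring

theorem tensor_product_filter_accuracy (m : ℕ) (hm : 1 ≤ m) (P : Polynomial ℝ)
    (hmass : (∫ ξ in (-1 : ℝ)..1, P.eval ξ) = 1)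
    (hmom : ∀ i, 1 ≤ i → i ≤ m → (∫ ξ in (-1 : ℝ)..1, ξ ^ i * P.eval ξ) = 0) :
    ∃ C : ℝ, ∀ ε : ℝ, 0 < ε → ∀ x y : ℝ, ∀ K : ℝ, ∀ f : ℝ × ℝ → ℝ,
      ContDiffOn ℝ (m + 1 : ℕ) f (Set.Icc (x - ε) (x + ε) ×ˢ Set.Icc (y - ε) (y + ε)) →
      (∀ p ∈ Set.Icc (x - ε) (x + ε) ×ˢ Set.Icc (y - ε) (y + ε),
        ∀ v : Fin (m + 1) → ℝ × ℝ, (∀ i, v i = (1, 0) ∨ v i = (0, 1)) →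
          |iteratedFDerivWithin ℝ (m + 1) f
              (Set.Icc (x - ε) (x + ε) ×ˢ Set.Icc (y - ε) (y + ε)) p v| ≤ K) →
      |(∫ τ in (-1 : ℝ)..1, ∫ η in (-1 : ℝ)..1,
          f (x - ε * τ, y - ε * η) * (P.eval τ * P.eval η)) - f (x, y)| ≤
        C * K * ε ^ (m + 1) :=
  tensor_product_filter_accuracy_general m P hmass hmom
end
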